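/- For all integers 1 ≤ k ≤ n, the sum over decreasing sequences of positive integers n_1 ≥ ... ≥ n_k with ∑ n_i = n of the number of set partitions of an n-set into k blocks of sizes (n_1,...,n_k), weighted by ∏_{i=1}^k [1/2]_{n_i - 1}, equals C(2n-k-1, n-1) · (Γ(n)/Γ(k)) · 2^{2k-2n}, where [1/2]_m = ∏_{j=1}^m (j - 1/2). -/

import Mathlib

/-!
Deleting the point `a` from a partition of `insert a s` leaves a partition `Q` of `s` together with
the part `B` of `Q` that `a` had joined, where `B = ∅` when `{a}` was a part. Since
`[1/2]_m = (m - 1/2) [1/2]_{m-1}`, joining `a` to `B` multiplies the weight by `#B - 1/2`, and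
these factors add up to `#s - #Q/2`. So the weighted sums `S(n, k)` satisfy
`S(n+1, k+1) = S(n, k) + (n - (k+1)/2) S(n, k+1)`, and so does the closed form, which equals
`(2n-k-1)! / ((k-1)! (n-k)! 4^(n-k))`.
-/

open Finset

/-- `[1/2]_m = ∏_{j=1}^m (j - 1/2)`. -/
noncomputable def halfRising (m : ℕ) : ℝ := ∏ j ∈ Finset.Icc 1 m, ((j : ℝ) - 1 / 2)

namespace Finpartition

section GeneralizedBooleanAlgebra

variable {α : Type*} [GeneralizedBooleanAlgebra α] [DecidableEq α] {a b : α}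

theorem avoid_parts_of_disjoint (P : Finpartition a)
    (hb : ∀ c ∈ P.parts, c ≠ b → Disjoint c b) : (P.avoid b).parts = P.parts.erase b := by
  ext c
  simp only [mem_avoid, mem_erase]
  constructor
  · rintro ⟨d, hd, hdb, rfl⟩
    have hne : d ≠ b := by rintro rfl; exact hdb le_rfl
    rw [(hb d hd hne).sdiff_eq_left]
    exact ⟨hne, hd⟩
  · rintro ⟨hne, hc⟩
    refine ⟨c, hc, fun hcb => P.ne_bot hc ?_, (hb c hc hne).sdiff_eq_left⟩
    exact (hb c hc hne).eq_bot_of_le hcb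

end GeneralizedBooleanAlgebra

variable {α : Type*} [DecidableEq α] {s B : Finset α} {a : α}

theorem insert_notMem_parts (P : Finpartition s) (ha : a ∉ s) (B : Finset α) :
    insert a B ∉ P.parts :=
  fun h => ha (P.subset h (mem_insert_self a B))

theorem subset_of_mem_insert_empty (P : Finpartition s) (hB : B ∈ insert ∅ P.parts) :
    B ⊆ s := by
  rcases mem_insert.1 hB with rfl | hB
  · exact empty_subset s
  · exact P.subset hB

theorem notMem_of_mem_insert_empty (P : Finpartition s) (ha : a ∉ s)
    (hB : B ∈ insert ∅ P.parts) : a ∉ B :=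
  fun h => ha (P.subset_of_mem_insert_empty hB h)

def insertPoint (P : Finpartition s) (ha : a ∉ s) (hB : B ∈ insert ∅ P.parts) :
    Finpartition (insert a s) :=
  (P.avoid B).extend (b := insert a B) (insert_ne_empty a B)
    (disjoint_insert_right.2 ⟨fun h => ha (mem_sdiff.1 h).1, sdiff_disjoint⟩)
    (by rw [sup_eq_union, union_insert, sdiff_union_of_subset (P.subset_of_mem_insert_empty hB)])

theorem insertPoint_parts (P : Finpartition s) (ha : a ∉ s) (hB : B ∈ insert ∅ P.parts) :
    (P.insertPoint ha hB).parts = insert (insert a B) (P.parts.erase B) := by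
  rw [insertPoint, extend_parts, avoid_parts_of_disjoint]
  intro C hC hCB
  rcases mem_insert.1 hB with rfl | hB
  · exact disjoint_empty_right C
  · exact P.disjoint hC hB hCB

def erasePoint (P : Finpartition (insert a s)) (ha : a ∉ s) : Finpartition s :=
  (P.avoid {a}).copy <| by
    rw [insert_sdiff_of_mem s (mem_singleton_self a), sdiff_singleton_eq_erase,
      erase_eq_of_notMem ha]

theorem avoid_singleton_parts {t : Finset α} (P : Finpartition t) (ha : a ∈ t) :
    (P.avoid {a}).parts = (insert ((P.part a).erase a) (P.parts.erase (P.part a))).erase ∅ := by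
  have himage :
      P.parts.image (· \ {a}) = insert ((P.part a).erase a) (P.parts.erase (P.part a)) := by
    conv_lhs => rw [← insert_erase (P.part_mem.2 ha)]
    rw [image_insert, sdiff_singleton_eq_erase]
    congr 1
    refine (image_congr fun C hC => ?_).trans image_id
    have haC : a ∉ C := fun haC =>
      (mem_erase.1 hC).1 (P.part_eq_of_mem (mem_erase.1 hC).2 haC).symm
    simp [haC]
  rw [avoid, ofErase_parts, himage, bot_eq_empty]

theorem erasePoint_parts (P : Finpartition (insert a s)) (ha : a ∉ s) :
    (P.erasePoint ha).parts = (insert ((P.part a).erase a) (P.parts.erase (P.part a))).erase ∅ :=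
  P.avoid_singleton_parts (mem_insert_self a s)

theorem part_insertPoint (P : Finpartition s) (ha : a ∉ s) (hB : B ∈ insert ∅ P.parts) :
    (P.insertPoint ha hB).part a = insert a B :=
  part_eq_of_mem _ (by rw [insertPoint_parts]; exact mem_insert_self _ _) (mem_insert_self a B)

theorem erasePoint_insertPoint (P : Finpartition s) (ha : a ∉ s) (hB : B ∈ insert ∅ P.parts) :
    (P.insertPoint ha hB).erasePoint ha = P := by
  ext1
  rw [erasePoint_parts, part_insertPoint, insertPoint_parts,
    erase_insert (P.notMem_of_mem_insert_empty ha hB),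
    erase_insert fun h => P.insert_notMem_parts ha B (mem_of_mem_erase h)]
  rcases mem_insert.1 hB with rfl | hB
  · rw [erase_insert_eq_erase, erase_idem, erase_eq_of_notMem P.empty_notMem_parts]
  · rw [insert_erase hB, erase_eq_of_notMem P.empty_notMem_parts]

theorem erase_part_notMem_erase (P : Finpartition s) (a : α) :
    (P.part a).erase a ∉ P.parts.erase (P.part a) := by
  intro h
  obtain ⟨x, hx⟩ := P.nonempty_of_mem_parts (mem_of_mem_erase h)
  have hpart : P.part a ∈ P.parts := P.part_mem.2 (P.part_nonempty.1 ⟨x, mem_of_mem_erase hx⟩)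
  exact ne_of_mem_erase h (P.eq_of_mem_parts (mem_of_mem_erase h) hpart hx (mem_of_mem_erase hx))

theorem erase_part_mem_insert_erasePoint (P : Finpartition (insert a s)) (ha : a ∉ s) :
    (P.part a).erase a ∈ insert ∅ (P.erasePoint ha).parts := by
  rw [erasePoint_parts, mem_insert, mem_erase]
  by_cases h : (P.part a).erase a = ∅
  · exact Or.inl h
  · exact Or.inr ⟨h, mem_insert_self _ _⟩

theorem insertPoint_erasePoint (P : Finpartition (insert a s)) (ha : a ∉ s) :
    (P.erasePoint ha).insertPoint ha (P.erase_part_mem_insert_erasePoint ha) = P := by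
  ext1
  rw [insertPoint_parts, erasePoint_parts, erase_right_comm,
    erase_insert (P.erase_part_notMem_erase a),
    erase_eq_of_notMem fun h => P.empty_notMem_parts (mem_of_mem_erase h),
    insert_erase (P.mem_part_self.2 (mem_insert_self a s)),
    insert_erase (P.part_mem.2 (mem_insert_self a s))]

theorem sum_univ_insert {M : Type*} [AddCommMonoid M] (ha : a ∉ s)
    (g : Finset (Finset α) → M) :
    ∑ P : Finpartition (insert a s), g P.parts =
      ∑ Q : Finpartition s, ∑ B ∈ insert ∅ Q.parts,
        g (insert (insert a B) (Q.parts.erase B)) := by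
  rw [sum_sigma']
  refine sum_bij' (fun P _ => ⟨P.erasePoint ha, (P.part a).erase a⟩)
    (fun Q hQ => Q.1.insertPoint ha (mem_sigma.1 hQ).2) (fun P _ => ?_) (fun Q _ => mem_univ _)
    (fun P _ => P.insertPoint_erasePoint ha) (fun Q hQ => ?_) (fun P _ => ?_)
  · exact mem_sigma.2 ⟨mem_univ _, P.erase_part_mem_insert_erasePoint ha⟩
  · obtain ⟨Q, B⟩ := Q
    have hB := (mem_sigma.1 hQ).2
    exact Sigma.ext (Q.erasePoint_insertPoint ha hB) (heq_of_eq (by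
      rw [part_insertPoint, erase_insert (Q.notMem_of_mem_insert_empty ha hB)]))
  · dsimp only
    rw [← insertPoint_parts _ ha (P.erase_part_mem_insert_erasePoint ha), insertPoint_erasePoint]

end Finpartition

section PartitionSum

variable {α R : Type*} [DecidableEq α] [CommSemiring R] {s : Finset α} {a : α}

def partitionSum (w : ℕ → R) (s : Finset α) (k : ℕ) : R :=
  ∑ P : Finpartition s with #P.parts = k, ∏ A ∈ P.parts, w #A

theorem Finpartition.sum_prod_insert_part {w : ℕ → R} {c : R}
    (hw : ∀ m, 1 ≤ m → w (m + 1) = (m + c) * w m) (Q : Finpartition s) (ha : a ∉ s) :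
    ∑ B ∈ Q.parts, w #(insert a B) * ∏ C ∈ Q.parts.erase B, w #C =
      (#s + #Q.parts * c) * ∏ C ∈ Q.parts, w #C := by
  have hterm : ∀ B ∈ Q.parts, w #(insert a B) * ∏ C ∈ Q.parts.erase B, w #C =
      (#B + c) * ∏ C ∈ Q.parts, w #C := fun B hB => by
    rw [card_insert_of_notMem fun h => ha (Q.subset hB h),
      hw _ (Q.nonempty_of_mem_parts hB).card_pos, mul_assoc, mul_prod_erase _ (fun C => w #C) hB]
  rw [sum_congr rfl hterm, ← sum_mul, sum_add_distrib, sum_const, nsmul_eq_mul,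
    ← Nat.cast_sum, Q.sum_card_parts]

theorem partitionSum_insert_succ {w : ℕ → R} {c : R}
    (hw : ∀ m, 1 ≤ m → w (m + 1) = (m + c) * w m) (ha : a ∉ s) (k : ℕ) :
    partitionSum w (insert a s) (k + 1) =
      w 1 * partitionSum w s k + (#s + (k + 1) * c) * partitionSum w s (k + 1) := by
  simp only [partitionSum, sum_filter, mul_sum, ← sum_add_distrib]
  rw [Finpartition.sum_univ_insert ha (fun F => if #F = k + 1 then ∏ A ∈ F, w #A else 0)]
  refine sum_congr rfl fun Q _ => ?_
  have hsingleton : {a} ∉ Q.parts := Q.insert_notMem_parts ha ∅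
  have hcard : ∀ B ∈ Q.parts, #(insert (insert a B) (Q.parts.erase B)) = #Q.parts :=
    fun B hB => by
      rw [card_insert_of_notMem fun h => Q.insert_notMem_parts ha B (mem_of_mem_erase h),
        card_erase_add_one hB]
  rw [sum_insert Q.empty_notMem_parts, erase_eq_of_notMem Q.empty_notMem_parts, insert_empty,
    card_insert_of_notMem hsingleton, prod_insert hsingleton, card_singleton]
  congr 1
  · simp only [Nat.add_right_cancel_iff, mul_ite, mul_zero]
  by_cases hk : #Q.parts = k + 1
  · have hkR : (k + 1 : R) = #Q.parts := by rw [hk]; push_cast; rfl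
    rw [if_pos hk, hkR, ← Q.sum_prod_insert_part hw ha]
    refine sum_congr rfl fun B hB => ?_
    rw [hcard B hB, if_pos hk,
      prod_insert fun h => Q.insert_notMem_parts ha B (mem_of_mem_erase h)]
  · rw [if_neg hk, mul_zero]
    exact sum_eq_zero fun B hB => by rw [hcard B hB, if_neg hk]

theorem partitionSum_empty_zero (w : ℕ → R) : partitionSum w (∅ : Finset α) 0 = 1 := by
  have hparts (P : Finpartition (∅ : Finset α)) : P.parts = ∅ := P.parts_eq_empty_iff.2 rfl
  have : Unique (Finpartition (∅ : Finset α)) := Finpartition.instUniqueBot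
  simp [partitionSum, hparts]

theorem partitionSum_zero_of_nonempty (w : ℕ → R) (hs : s.Nonempty) : partitionSum w s 0 = 0 :=
  sum_eq_zero fun P hP => absurd (P.parts_eq_empty_iff.1 (card_eq_zero.1 (mem_filter.1 hP).2))
    hs.ne_empty

theorem partitionSum_eq_zero_of_card_lt (w : ℕ → R) {k : ℕ} (hk : #s < k) :
    partitionSum w s k = 0 :=
  sum_eq_zero fun P hP => absurd ((mem_filter.1 hP).2 ▸ P.card_parts_le_card) hk.not_ge

end PartitionSum

open scoped Nat

theorem halfRising_zero : halfRising 0 = 1 := by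
  simp [halfRising]

theorem halfRising_succ (m : ℕ) : halfRising (m + 1) = (m + 1 / 2) * halfRising m := by
  rw [halfRising, halfRising, prod_Icc_succ_top (Nat.le_add_left 1 m)]
  push_cast
  ring

noncomputable def halfRisingTriangle (i j : ℕ) : ℝ := (i + 2 * j)! / (i ! * j ! * 4 ^ j)

theorem halfRisingTriangle_zero_right (i : ℕ) : halfRisingTriangle i 0 = 1 := by
  simp [halfRisingTriangle, i.factorial_ne_zero]

theorem halfRisingTriangle_zero_succ (j : ℕ) :
    halfRisingTriangle 0 (j + 1) = (j + 1 / 2) * halfRisingTriangle 0 j := by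
  simp only [halfRisingTriangle, zero_add, show 2 * (j + 1) = 2 * j + 1 + 1 by ring,
    Nat.factorial_succ, Nat.factorial_zero]
  push_cast
  field_simp
  ring

theorem halfRisingTriangle_succ_succ (i j : ℕ) :
    halfRisingTriangle (i + 1) (j + 1) =
      halfRisingTriangle i (j + 1) + ((i + 2 * j + 2) / 2) * halfRisingTriangle (i + 1) j := by
  simp only [halfRisingTriangle, show i + 1 + 2 * (j + 1) = i + 2 * j + 1 + 1 + 1 by ring,
    show i + 2 * (j + 1) = i + 2 * j + 1 + 1 by ring, show i + 1 + 2 * j = i + 2 * j + 1 by ring,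
    Nat.factorial_succ]
  push_cast
  field_simp
  ring

theorem choose_mul_factorial_div_eq_halfRisingTriangle {n k : ℕ} (hk : 1 ≤ k) (hkn : k ≤ n) :
    (Nat.choose (2 * n - k - 1) (n - 1) : ℝ) * (Nat.factorial (n - 1)) /
        (Nat.factorial (k - 1)) * (2 : ℝ) ^ (2 * (k : ℤ) - 2 * n) =
      halfRisingTriangle (k - 1) (n - k) := by
  obtain ⟨i, rfl⟩ : ∃ i, k = i + 1 := ⟨k - 1, by omega⟩
  obtain ⟨j, rfl⟩ : ∃ j, n = i + j + 1 := ⟨n - i - 1, by omega⟩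
  have hchoose := Nat.choose_mul_factorial_mul_factorial (show i + j ≤ i + 2 * j by omega)
  rw [show i + 2 * j - (i + j) = j by omega] at hchoose
  have hzpow : (2 : ℝ) ^ (2 * ((i + 1 : ℕ) : ℤ) - 2 * ((i + j + 1 : ℕ) : ℤ)) = (4 ^ j)⁻¹ := by
    rw [show 2 * ((i + 1 : ℕ) : ℤ) - 2 * ((i + j + 1 : ℕ) : ℤ) = -((2 * j : ℕ) : ℤ) by
      push_cast; ring, zpow_neg, zpow_natCast, pow_mul]
    norm_num
  rw [show 2 * (i + j + 1) - (i + 1) - 1 = i + 2 * j by omega, show i + j + 1 - 1 = i + j by omega,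
    show i + 1 - 1 = i by omega, show i + j + 1 - (i + 1) = j by omega, hzpow, halfRisingTriangle,
    ← hchoose]
  push_cast
  field_simp

theorem partitionSum_halfRising {α : Type*} [DecidableEq α] (s : Finset α) {i j : ℕ}
    (hs : #s = i + j + 1) :
    partitionSum (fun m => halfRising (m - 1)) s (i + 1) = halfRisingTriangle i j := by
  have hw : ∀ m, 1 ≤ m → halfRising (m + 1 - 1) = (m + -(1 / 2)) * halfRising (m - 1) := by
    rintro (_ | m) hm
    · omega
    · rw [Nat.add_sub_cancel, Nat.add_sub_cancel, halfRising_succ]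
      push_cast
      ring
  induction s using Finset.induction_on generalizing i j with
  | empty => simp at hs
  | @insert a s ha ih =>
    rw [card_insert_of_notMem ha, Nat.add_right_cancel_iff] at hs
    rw [partitionSum_insert_succ hw ha, Nat.sub_self, halfRising_zero, one_mul]
    rcases i with _ | i <;> rcases j with _ | j
    · rw [card_eq_zero.1 hs, partitionSum_empty_zero, partitionSum_eq_zero_of_card_lt _ (by simp),
        halfRisingTriangle_zero_right, mul_zero, add_zero]
    · rw [partitionSum_zero_of_nonempty _ (card_pos.1 (by omega)), ih (i := 0) (j := j) (by omega),
        halfRisingTriangle_zero_succ, hs]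
      push_cast
      ring
    · rw [ih (i := i) (j := 0) (by omega), partitionSum_eq_zero_of_card_lt _ (by omega),
        halfRisingTriangle_zero_right, halfRisingTriangle_zero_right, mul_zero, add_zero]
    · rw [ih (i := i) (j := j + 1) (by omega), ih (i := i + 1) (j := j) (by omega),
        halfRisingTriangle_succ_succ, hs]
      push_cast
      ring

theorem sum_partitions_halfRising (n k : ℕ) (hk : 1 ≤ k) (hkn : k ≤ n) :
    ∑ P ∈ Finset.univ.filter
        (fun P : Finpartition (Finset.univ : Finset (Fin n)) => P.parts.card = k),
      ∏ A ∈ P.parts, halfRising (A.card - 1)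
    = (Nat.choose (2 * n - k - 1) (n - 1) : ℝ) * (Nat.factorial (n - 1)) /
        (Nat.factorial (k - 1)) * (2 : ℝ) ^ (2 * (k : ℤ) - 2 * n) := by
  obtain ⟨i, rfl⟩ : ∃ i, k = i + 1 := ⟨k - 1, by omega⟩
  obtain ⟨j, rfl⟩ : ∃ j, n = i + j + 1 := ⟨n - i - 1, by omega⟩
  rw [choose_mul_factorial_div_eq_halfRisingTriangle hk hkn, Nat.add_sub_cancel,
    show i + j + 1 - (i + 1) = j by omega]
  exact partitionSum_halfRising univ (by simp)
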